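/- arXiv:1302.2377 — 4 statements merged into one kernel-verified Lean document; each statement's English description precedes it below -/
import Mathlib

section
/- Let R be a henselian discrete valuation ring with residue field of characteristic not 2, K its fraction field, v its valuation, and d ∈ K× with v(d) odd. Then the classes in K×/K×² of the nonzero values x² − d·y² (x, y ∈ K) are exactly the classes of 1 and of −d. -/
/-!
Write `c = x² - d y²` with `x, y ≠ 0` and put `t = d (y/x)²`. Its valuation `v(d) + 2 v(y/x)` is
odd, hence nonzero. If `v(t) > 0`, Hensel's lemma makes `1 - t` a square, so `c = x² (1 - t)` is a
square. If `v(t) < 0`, the same applies to `1 - t⁻¹`, and `c = -d y² (1 - t⁻¹)` is `-d` times a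
square.
-/

open Polynomial

namespace HenselianLocalRing

variable {R K : Type*} [CommRing R] [HenselianLocalRing R] [Field K] [Algebra R K]

lemma isSquare_one_sub (h2 : (2 : IsLocalRing.ResidueField R) ≠ 0) {r : R}
    (hr : r ∈ IsLocalRing.maximalIdeal R) : IsSquare (1 - r) := by
  have h2R : IsUnit (2 : R) := by
    rwa [← IsLocalRing.residue_ne_zero_iff_isUnit, map_ofNat]
  -- Lift the simple root `1` of `X² - 1` modulo the maximal ideal to a root of `X² - (1 - r)`.
  obtain ⟨s, hs, -⟩ := is_henselian (X ^ 2 - C (1 - r))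
    (monic_X_pow_sub_C _ two_ne_zero) 1 (by simpa using hr)
    (by simpa [derivative_X_pow, one_add_one_eq_two] using h2R)
  simp only [IsRoot, eval_sub, eval_pow, eval_X, eval_C] at hs
  exact ⟨s, by linear_combination -hs⟩

lemma isSquare_one_sub_smul_zpow (h2 : (2 : IsLocalRing.ResidueField R) ≠ 0)
    {π : R} (hπ : π ∈ IsLocalRing.maximalIdeal R) (w : Rˣ) {m : ℤ} (hm : 0 < m) :
    IsSquare (1 - w • algebraMap R K π ^ m) := by
  lift m to ℕ using hm.le
  have hmem : (w : R) * π ^ m ∈ IsLocalRing.maximalIdeal R :=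
    Ideal.mul_mem_left _ _ (Ideal.pow_mem_of_mem _ hπ _ (by omega))
  obtain ⟨s, hs⟩ := isSquare_one_sub h2 hmem
  refine ⟨algebraMap R K s, ?_⟩
  rw [zpow_natCast, Units.smul_def, Algebra.smul_def, ← map_pow, ← map_mul,
    ← map_one (algebraMap R K), ← map_sub, hs, map_mul]

lemma isSquare_one_sub_or_isSquare_one_sub_inv (h2 : (2 : IsLocalRing.ResidueField R) ≠ 0)
    {π : R} (hπ : π ∈ IsLocalRing.maximalIdeal R) (w : Rˣ) {m : ℤ} (hm : m ≠ 0) :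
    IsSquare (1 - w • algebraMap R K π ^ m) ∨ IsSquare (1 - (w • algebraMap R K π ^ m)⁻¹) := by
  rcases hm.lt_or_gt with hneg | hpos
  · right
    rw [Units.smul_def, Algebra.smul_def, mul_inv, ← map_units_inv, ← zpow_neg,
      ← Algebra.smul_def, ← Units.smul_def]
    exact isSquare_one_sub_smul_zpow h2 hπ w⁻¹ (by omega)
  · exact .inl (isSquare_one_sub_smul_zpow h2 hπ w hpos)

end HenselianLocalRing

lemma IsDiscreteValuationRing.exists_sub_mul_sq_eq_sq_or_eq_neg_mul_sq {R K : Type*} [CommRing R]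
    [IsDomain R] [IsDiscreteValuationRing R] [HenselianLocalRing R] [Field K] [Algebra R K]
    [IsFractionRing R K] (h2 : (2 : IsLocalRing.ResidueField R) ≠ 0) {π : R} (hπ : Irreducible π)
    {d : K} {u : Rˣ} {n : ℤ} (hd : d = u • algebraMap R K π ^ n) (hn : Odd n) (x y : K) :
    ∃ z, x ^ 2 - d * y ^ 2 = z ^ 2 ∨ x ^ 2 - d * y ^ 2 = -(d * z ^ 2) := by
  rcases eq_or_ne y 0 with rfl | hy
  · exact ⟨x, .inl (by ring)⟩
  rcases eq_or_ne x 0 with rfl | hx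
  · exact ⟨y, .inr (by ring)⟩
  have hπK : algebraMap R K π ≠ 0 := by simpa using hπ.ne_zero
  have hd0 : d ≠ 0 := by simp [hd, Units.smul_def, Algebra.smul_def, zpow_ne_zero, hπK]
  obtain ⟨k, v, hq⟩ := exists_units_eq_smul_zpow_of_irreducible hπ (div_ne_zero hy hx)
  have ht : d * (y / x) ^ 2 = (u * v ^ 2) • algebraMap R K π ^ (n + 2 * k) := by
    simp only [hd, hq, Units.smul_def, Algebra.smul_def, zpow_add₀ hπK, zpow_mul', zpow_ofNat]
    push_cast
    ring
  have hm : n + 2 * k ≠ 0 := fun h ↦ by simpa [h] using hn.add_even (even_two_mul k)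
  have hπm : π ∈ IsLocalRing.maximalIdeal R := (IsLocalRing.mem_maximalIdeal _).mpr hπ.not_isUnit
  rcases HenselianLocalRing.isSquare_one_sub_or_isSquare_one_sub_inv (K := K) h2 hπm _ hm
    with ⟨s, hs⟩ | ⟨s, hs⟩ <;> rw [← ht] at hs
  · refine ⟨x * s, .inl ?_⟩
    field_simp at hs
    linear_combination hs
  · refine ⟨y * s, .inr ?_⟩
    field_simp at hs
    linear_combination -hs

/-- Let `R` be a henselian discrete valuation ring with residue field of characteristic not 2,
`K` its fraction field, `v` its valuation, and `d ∈ Kˣ` with `v(d)` odd. Then the classes in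
`Kˣ/Kˣ²` of the nonzero values `x² − d·y²` (`x, y ∈ K`) are exactly the classes of `1`
and of `−d`.  (The valuation is encoded via a decomposition `d = unit · π ^ n`, `n` odd;
"having class `1` or `−d`" is expressed as being of the form `z²` or `−d·z²`.) -/
theorem stmt_2 (R K : Type*) [CommRing R] [IsDomain R] [IsDiscreteValuationRing R]
    [HenselianLocalRing R] [Field K] [Algebra R K] [IsFractionRing R K]
    (h2 : (2 : IsLocalRing.ResidueField R) ≠ 0)
    (π : R) (hπ : Irreducible π)
    (d : K) (u : Rˣ) (n : ℤ)
    (hd : d = algebraMap R K u * algebraMap R K π ^ n)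
    (hn : Odd n) :
    {c : K | c ≠ 0 ∧ ∃ x y : K, x ^ 2 - d * y ^ 2 = c}
      = {c : K | c ≠ 0 ∧ ∃ z : K, c = z ^ 2 ∨ c = -(d * z ^ 2)} := by
  rw [← Algebra.smul_def, ← Units.smul_def] at hd
  ext c
  constructor
  · rintro ⟨hc, x, y, rfl⟩
    exact ⟨hc, IsDiscreteValuationRing.exists_sub_mul_sq_eq_sq_or_eq_neg_mul_sq h2 hπ hd hn x y⟩
  · rintro ⟨hc, z, rfl | rfl⟩
    exacts [⟨hc, z, 0, by ring⟩, ⟨hc, 0, z, by ring⟩]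
end

section
/- Let R be a henselian discrete valuation ring whose residue field κ has characteristic not 2 and satisfies cd₂(κ) ≤ 1 (equivalently: every conic x² − αy² = β with α, β ∈ κ× has a κ-point). Let d ∈ K× with v(d) even and d not a square in K. Then the nonzero values of x² − d·y² for x, y ∈ K are exactly the elements of K× that are a unit times a square. -/
/-!
Write `d = u s²` with `u ∈ Rˣ` and `s = π^(n/2)`, so that `x² − d y² = x² − u (s y)²`; the residue
`ū` is not a square, otherwise Hensel's lemma would make `d` a square. Over a valuation ring every
pair `(x, y) ∈ K²` is `r·(a, b)` with `a` or `b` a unit of `R`, and then `a² − u b²` is a unit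
because `x² − ū y²` is anisotropic over `κ`. Conversely, by Hensel's lemma a `κ`-point of the conic
`x² − ū y² = w̄` lifts to an `R`-point of `x² − u y² = w`.
-/

open IsLocalRing Polynomial

theorem eq_zero_of_sq_sub_mul_sq_eq_zero {F : Type*} [Field F] {α a b : F} (hα : ¬IsSquare α)
    (h : a ^ 2 - α * b ^ 2 = 0) : a = 0 ∧ b = 0 := by
  have hb : b = 0 := by
    by_contra hb
    exact hα ⟨a / b, by field_simp; linear_combination -h⟩
  subst hb
  exact ⟨by simpa using h, rfl⟩

section Henselian

variable {R : Type*} [CommRing R] [HenselianLocalRing R]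

theorem isSquare_of_isSquare_residue (h2 : (2 : ResidueField R) ≠ 0) {c : R} (hc : IsUnit c)
    (h : IsSquare (residue R c)) : IsSquare c := by
  obtain ⟨a₀, ha₀⟩ := h
  obtain ⟨a₀, rfl⟩ := residue_surjective a₀
  have ha₀_unit : IsUnit a₀ := by
    rw [← residue_ne_zero_iff_isUnit]
    rintro h0
    rw [h0, mul_zero, residue_eq_zero_iff] at ha₀
    exact (mem_maximalIdeal _).mp ha₀ hc
  have h2_unit : IsUnit (2 : R) := (residue_ne_zero_iff_isUnit _).mp (by rwa [map_ofNat])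
  obtain ⟨a, ha, -⟩ := HenselianLocalRing.is_henselian (X ^ 2 - C c)
    (monic_X_pow_sub_C c two_ne_zero) a₀
    (by
      rw [← residue_eq_zero_iff]
      simp only [eval_sub, eval_pow, eval_X, eval_C, map_sub, map_pow, ha₀]
      ring)
    (by simpa [derivative_X_pow, one_add_one_eq_two] using h2_unit.mul ha₀_unit)
  exact ⟨a, by simpa [sub_eq_zero, sq, eq_comm] using ha⟩

theorem exists_sq_sub_mul_sq_eq_unit (h2 : (2 : ResidueField R) ≠ 0)
    (hcd : ∀ α β : ResidueField R, α ≠ 0 → β ≠ 0 → ∃ x y : ResidueField R, x ^ 2 - α * y ^ 2 = β)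
    (u w : Rˣ) : ∃ x y : R, x ^ 2 - u * y ^ 2 = w := by
  have hu : residue R u ≠ 0 := (residue_ne_zero_iff_isUnit _).mpr u.isUnit
  have hw : residue R w ≠ 0 := (residue_ne_zero_iff_isUnit _).mpr w.isUnit
  obtain ⟨x₁, y₁, hxy⟩ := hcd _ _ hu hw
  obtain ⟨y₀, rfl⟩ := residue_surjective y₁
  rcases eq_or_ne x₁ 0 with rfl | hx
  · have hu_inv : residue R ↑u⁻¹ * residue R u = 1 := by
      rw [← map_mul, Units.inv_mul, map_one]
    obtain ⟨y, hy⟩ := isSquare_of_isSquare_residue h2 (c := -↑(u⁻¹ * w)) (by simp)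
      ⟨residue R y₀, by
        simp only [map_neg, Units.val_mul, map_mul]
        linear_combination (residue R y₀ ^ 2) * hu_inv + residue R ↑u⁻¹ * hxy⟩
    exact ⟨0, y, by rw [← sq] at hy; simp [← hy]⟩
  · obtain ⟨x₀, rfl⟩ := residue_surjective x₁
    obtain ⟨x, hx⟩ := isSquare_of_isSquare_residue h2 (c := u * y₀ ^ 2 + w)
      ((residue_ne_zero_iff_isUnit _).mp (by simpa [← hxy] using pow_ne_zero 2 hx))
      ⟨residue R x₀, by simp [← hxy, sq]⟩
    exact ⟨x, y₀, by rw [sq x, ← hx]; ring⟩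

end Henselian

theorem IsLocalRing.isUnit_sq_sub_mul_sq {R : Type*} [CommRing R] [IsLocalRing R] {u a b : R}
    (hu : ¬IsSquare (residue R u)) (hab : IsUnit a ∨ IsUnit b) : IsUnit (a ^ 2 - u * b ^ 2) := by
  rw [← residue_ne_zero_iff_isUnit]
  intro h
  rw [map_sub, map_mul, map_pow, map_pow] at h
  obtain ⟨ha, hb⟩ := eq_zero_of_sq_sub_mul_sq_eq_zero hu h
  rcases hab with hab | hab
  · exact (residue_ne_zero_iff_isUnit a).mpr hab ha
  · exact (residue_ne_zero_iff_isUnit b).mpr hab hb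

section ValuationRing

variable {R K : Type*} [CommRing R] [IsDomain R] [ValuationRing R] [Field K] [Algebra R K]
  [IsFractionRing R K]

theorem ValuationRing.exists_eq_mul_of_isUnit_or_isUnit (x y : K) :
    ∃ (r : K) (a b : R), (IsUnit a ∨ IsUnit b) ∧
      x = r * algebraMap R K a ∧ y = r * algebraMap R K b := by
  rcases eq_or_ne y 0 with rfl | hy
  · exact ⟨x, 1, 0, Or.inl isUnit_one, by simp, by simp⟩
  rcases eq_or_ne x 0 with rfl | hx
  · exact ⟨y, 0, 1, Or.inr isUnit_one, by simp, by simp⟩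
  rcases isInteger_or_isInteger R (x / y) with ⟨a, ha⟩ | ⟨b, hb⟩
  · exact ⟨y, a, 1, Or.inr isUnit_one, by rw [ha]; field_simp, by simp⟩
  · exact ⟨x, 1, b, Or.inl isUnit_one, by simp, by rw [hb, inv_div]; field_simp⟩

theorem exists_unit_mul_sq_eq_sq_sub_mul_sq {u : R} (hu : ¬IsSquare (residue R u)) (x y : K) :
    ∃ (w : Rˣ) (z : K), x ^ 2 - algebraMap R K u * y ^ 2 = algebraMap R K w * z ^ 2 := by
  obtain ⟨r, a, b, hab, rfl, rfl⟩ := ValuationRing.exists_eq_mul_of_isUnit_or_isUnit (R := R) x y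
  refine ⟨(IsLocalRing.isUnit_sq_sub_mul_sq hu hab).unit, r, ?_⟩
  simp only [IsUnit.unit_spec, map_sub, map_mul, map_pow]
  ring

end ValuationRing

/-- Let `R` be a henselian discrete valuation ring whose residue field `κ` has characteristic
not 2 and satisfies `cd₂(κ) ≤ 1`, expressed equivalently by: every conic `x² − αy² = β` with
`α, β ∈ κˣ` has a `κ`-point. Let `d ∈ Kˣ` with `v(d)` even and `d` not a square in `K`. Then
the nonzero values of `x² − d·y²` for `x, y ∈ K` are exactly the elements of `Kˣ` that are a
unit (of `R`) times a square (of `K`). -/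
theorem stmt_3 (R K : Type*) [CommRing R] [IsDomain R] [IsDiscreteValuationRing R]
    [HenselianLocalRing R] [Field K] [Algebra R K] [IsFractionRing R K]
    (h2 : (2 : IsLocalRing.ResidueField R) ≠ 0)
    (hcd : ∀ α β : IsLocalRing.ResidueField R, α ≠ 0 → β ≠ 0 →
      ∃ x y : IsLocalRing.ResidueField R, x ^ 2 - α * y ^ 2 = β)
    (π : R) (hπ : Irreducible π)
    (d : K) (u : Rˣ) (n : ℤ)
    (hd : d = algebraMap R K u * algebraMap R K π ^ n)
    (hn : Even n) (hdsq : ¬ IsSquare d) :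
    {c : K | c ≠ 0 ∧ ∃ x y : K, x ^ 2 - d * y ^ 2 = c}
      = {c : K | c ≠ 0 ∧ ∃ (w : Rˣ) (z : K), c = algebraMap R K w * z ^ 2} := by
  obtain ⟨e, rfl⟩ := hn
  have hπ0 : algebraMap R K π ≠ 0 :=
    (map_ne_zero_iff _ (IsFractionRing.injective R K)).mpr hπ.ne_zero
  set s := algebraMap R K π ^ e
  have hs : s ≠ 0 := zpow_ne_zero _ hπ0
  have hd' : d = algebraMap R K u * s ^ 2 := by rw [hd, zpow_add₀ hπ0, sq]
  have hu : ¬IsSquare (residue R u) := fun hsq ↦ hdsq <| by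
    obtain ⟨r, hr⟩ := isSquare_of_isSquare_residue h2 u.isUnit hsq
    exact ⟨algebraMap R K r * s, by rw [hd', hr, map_mul]; ring⟩
  ext c
  constructor
  · rintro ⟨hc, x, y, rfl⟩
    obtain ⟨w, z, h⟩ := exists_unit_mul_sq_eq_sq_sub_mul_sq hu x (s * y)
    exact ⟨hc, w, z, by rw [← h, hd']; ring⟩
  · rintro ⟨hc, w, z, rfl⟩
    obtain ⟨x, y, h⟩ := exists_sq_sub_mul_sq_eq_unit h2 hcd u w
    refine ⟨hc, algebraMap R K x * z, algebraMap R K y * z / s, ?_⟩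
    rw [hd', ← h]
    simp only [map_sub, map_mul, map_pow]
    field_simp
end

section
/- Let R be a regular local ring of dimension 2 with regular system of parameters π, δ, fraction field K, and maximal ideal m. Suppose z ∈ R is nonzero, its divisor is supported on the union of the divisors of π and δ, and z is a square in the fraction field of the henselization of the localization of R at the prime (π). Then z = u·π^{2r}·δ^{2s} in K with u ∈ R× whose image in R/(π) is a square; in particular the image of u in R/m is a square. -/
/-!
In the discrete valuation ring `S` the element `π` is a uniformizer, so `z = w·π^n` with `w` a
unit of `S`; since `S` is integrally closed, `z` being a square in `Frac S` forces `n` even and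
`w` a square in `S`, hence the residue of `w` is a square in `Frac(R/(π))`. The ring `R/(π)` is
a Noetherian local domain whose maximal ideal is generated by the image of `δ`, so it is
integrally closed (a field or a DVR), and the same argument there makes the exponent of `δ` even
and the image of `u₀` a square. If `δ ∈ (π)`, then `δ` is `π` times a unit and the first step
alone suffices.
-/

open IsLocalRing

theorem IsIntegrallyClosed.isSquare_of_isSquare_algebraMap {A K : Type*} [CommRing A]
    [IsDomain A] [IsIntegrallyClosed A] [Field K] [Algebra A K] [IsFractionRing A K] {c : A}
    (h : IsSquare (algebraMap A K c)) : IsSquare c := by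
  obtain ⟨t, ht⟩ := h
  obtain ⟨s, rfl⟩ : ∃ s : A, algebraMap A K s = t :=
    exists_algebraMap_eq_of_isIntegral_pow two_pos (by rw [sq, ← ht]; exact isIntegral_algebraMap)
  exact ⟨s, IsFractionRing.injective A K (by rw [ht, map_mul])⟩

theorem Prime.not_isSquare_mul {A : Type*} [CommMonoidWithZero A] [IsCancelMulZero A] {p c : A}
    (hp : Prime p) (hc : ¬p ∣ c) : ¬IsSquare (c * p) := by
  rintro ⟨s, hs⟩
  obtain ⟨s', rfl⟩ : p ∣ s := hp.dvd_of_dvd_pow (n := 2) (by rw [sq, ← hs]; exact dvd_mul_left p c)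
  refine hc ⟨s' * s', mul_right_cancel₀ hp.ne_zero ?_⟩
  rw [hs]; ac_rfl

theorem IsIntegrallyClosed.even_and_isSquare_of_isSquare_algebraMap_mul_pow {A K : Type*}
    [CommRing A] [IsDomain A] [IsIntegrallyClosed A] [Field K] [Algebra A K] [IsFractionRing A K]
    {p c : A} (hp : Prime p) (hc : ¬p ∣ c) {n : ℕ}
    (h : IsSquare (algebraMap A K (c * p ^ n))) : Even n ∧ IsSquare c := by
  obtain ⟨m, e, he, rfl⟩ : ∃ m e, e < 2 ∧ n = 2 * m + e :=
    ⟨n / 2, n % 2, n.mod_lt two_pos, (n.div_add_mod 2).symm⟩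
  have hpK : algebraMap A K p ≠ 0 := by simpa using hp.ne_zero
  have hsq : IsSquare (c * p ^ e) := by
    refine isSquare_of_isSquare_algebraMap (K := K) ?_
    have hquot : algebraMap A K (c * p ^ e) =
        algebraMap A K (c * p ^ (2 * m + e)) / (algebraMap A K p ^ m) ^ 2 := by
      simp only [map_mul, map_pow]
      field_simp
      ring
    exact hquot ▸ h.div (.sq _)
  interval_cases e
  · simpa using hsq
  · exact absurd (by simpa using hsq) (hp.not_isSquare_mul hc)

theorem IsDiscreteValuationRing.even_and_isSquare_residue_of_isSquare_algebraMap_mul_pow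
    {S K : Type*} [CommRing S] [IsDomain S] [IsDiscreteValuationRing S] [Field K] [Algebra S K]
    [IsFractionRing S K] {ϖ c : S} (hϖ : Irreducible ϖ) (hc : IsUnit c) {n : ℕ}
    (h : IsSquare (algebraMap S K (c * ϖ ^ n))) : Even n ∧ IsSquare (residue S c) :=
  (IsIntegrallyClosed.even_and_isSquare_of_isSquare_algebraMap_mul_pow hϖ.prime
    (fun hdvd ↦ hϖ.not_isUnit (isUnit_of_dvd_unit hdvd hc)) h).imp_right (·.map _)

theorem IsLocalRing.maximalIdeal_eq_span_singleton_of_surjective {R B : Type*} [CommRing R]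
    [CommRing B] [IsLocalRing R] [IsLocalRing B] {f : R →+* B} (hf : Function.Surjective f)
    {π δ : R} (hm : maximalIdeal R = Ideal.span {π, δ}) (hπ : f π = 0) :
    maximalIdeal B = Ideal.span {f δ} := by
  rw [← map_maximalIdeal_of_surjective f hf, hm, Ideal.map_span, Set.image_pair, hπ,
    Ideal.span_insert_zero]

theorem IsLocalRing.isIntegrallyClosed_of_isPrincipal_maximalIdeal {A : Type*} [CommRing A]
    [IsDomain A] [IsNoetherianRing A] [IsLocalRing A] (h : (maximalIdeal A).IsPrincipal) :
    IsIntegrallyClosed A := by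
  have htfae := (tfae_of_isNoetherianRing_of_isLocalRing_of_isDomain A).out 4 3
  exact (htfae.mp h).1

theorem IsLocalRing.isSquare_residue_of_isSquare_quotient_mk {R : Type*} [CommRing R]
    [IsLocalRing R] {I : Ideal R} (hI : I ≤ maximalIdeal R) {u : R}
    (h : IsSquare (Ideal.Quotient.mk I u)) : IsSquare (residue R u) := by
  have := h.map (Ideal.Quotient.factor hI)
  rwa [Ideal.Quotient.factor_mk] at this

theorem stmt_11_general (R : Type*) [CommRing R] [IsDomain R] [IsNoetherianRing R] [IsLocalRing R]
    (π δ : R) (hπ : Prime π) (hδ : Prime δ)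
    (hm : IsLocalRing.maximalIdeal R = Ideal.span {π, δ})
    (z : R)
    (u₀ : Rˣ) (a b : ℕ) (hsupp : z = (u₀ : R) * π ^ a * δ ^ b)
    -- `S` is the henselization of the localization of `R` at `(π)`:
    (S : Type*) [CommRing S] [IsDomain S] [IsDiscreteValuationRing S]
    [Algebra R S]
    (hunif : Irreducible (algebraMap R S π))
    [IsDomain (R ⧸ Ideal.span {π})]
    [Algebra (R ⧸ Ideal.span {π}) (IsLocalRing.ResidueField S)]
    [IsFractionRing (R ⧸ Ideal.span {π}) (IsLocalRing.ResidueField S)]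
    (hcomp : ∀ x : R, IsLocalRing.residue S (algebraMap R S x)
      = algebraMap (R ⧸ Ideal.span {π}) (IsLocalRing.ResidueField S)
          (Ideal.Quotient.mk (Ideal.span {π}) x))
    (FS : Type*) [Field FS] [Algebra S FS] [IsFractionRing S FS]
    [Algebra R FS] [IsScalarTower R S FS]
    (hsq : IsSquare (algebraMap R FS z)) :
    ∃ (u : Rˣ) (r s : ℕ),
      z = (u : R) * π ^ (2 * r) * δ ^ (2 * s) ∧
      IsSquare (Ideal.Quotient.mk (Ideal.span {π}) (u : R)) ∧
      IsSquare (IsLocalRing.residue R (u : R)) := by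
  set mk := Ideal.Quotient.mk (Ideal.span {π})
  have : IsLocalRing (R ⧸ Ideal.span {π}) := .of_surjective' mk Ideal.Quotient.mk_surjective
  have hmA : maximalIdeal (R ⧸ Ideal.span {π}) = Ideal.span {mk δ} :=
    maximalIdeal_eq_span_singleton_of_surjective Ideal.Quotient.mk_surjective hm
      (Ideal.Quotient.eq_zero_iff_mem.mpr (Ideal.mem_span_singleton_self π))
  have : IsIntegrallyClosed (R ⧸ Ideal.span {π}) :=
    isIntegrallyClosed_of_isPrincipal_maximalIdeal ⟨_, hmA⟩
  have hsq_residue (w : R) (n : ℕ) (hw : IsUnit (algebraMap R S w)) (hzw : z = w * π ^ n) :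
      Even n ∧ IsSquare (algebraMap _ (ResidueField S) (mk w)) := by
    rw [hzw, IsScalarTower.algebraMap_apply R S FS, map_mul, map_pow] at hsq
    rw [← hcomp]
    exact IsDiscreteValuationRing.even_and_isSquare_residue_of_isSquare_algebraMap_mul_pow
      hunif hw hsq
  have hπm : Ideal.span {π} ≤ maximalIdeal R := hm ▸ Ideal.span_mono (by simp)
  by_cases hd : mk δ = 0
  · obtain ⟨c, hc⟩ := Ideal.mem_span_singleton.mp (Ideal.Quotient.eq_zero_iff_mem.mp hd)
    have hcu : IsUnit c := (hδ.irreducible.isUnit_or_isUnit hc).resolve_left hπ.not_isUnit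
    set v := u₀ * hcu.unit ^ b
    have hzv : z = v * π ^ (a + b) := by
      simp only [v, hsupp, hc, Units.val_mul, Units.val_pow_eq_pow_val, IsUnit.unit_spec]
      ring
    obtain ⟨⟨r, hr⟩, hv⟩ := hsq_residue v (a + b) (v.isUnit.map _) hzv
    have hv := IsIntegrallyClosed.isSquare_of_isSquare_algebraMap hv
    exact ⟨v, r, 0, by rw [hzv, hr, two_mul, mul_zero, pow_zero, mul_one], hv,
      isSquare_residue_of_isSquare_quotient_mk hπm hv⟩
  · have hδS : IsUnit (algebraMap R S δ) := by
      rw [← residue_ne_zero_iff_isUnit, hcomp]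
      exact (map_ne_zero_iff _ (IsFractionRing.injective _ _)).mpr hd
    obtain ⟨⟨r, hr⟩, hw⟩ := hsq_residue (u₀ * δ ^ b) a
      (by rw [map_mul, map_pow]; exact (u₀.isUnit.map _).mul (hδS.pow b))
      (by rw [hsupp]; ring)
    have hδA : Prime (mk δ) := (Ideal.span_singleton_prime hd).mp (hmA ▸ inferInstance)
    rw [map_mul, map_pow] at hw
    obtain ⟨⟨s, hs⟩, hu⟩ := IsIntegrallyClosed.even_and_isSquare_of_isSquare_algebraMap_mul_pow
      hδA (fun h ↦ hδA.not_isUnit (isUnit_of_dvd_unit h (u₀.isUnit.map mk))) hw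
    exact ⟨u₀, r, s, by rw [hsupp, two_mul, two_mul, hr, hs], hu,
      isSquare_residue_of_isSquare_quotient_mk hπm hu⟩

/-- Let `R` be a regular local ring of dimension 2 with regular system of parameters `π, δ`,
fraction field `K`, and maximal ideal `m`. Suppose `z ∈ R` is nonzero, its divisor is
supported on the union of the divisors of `π` and `δ` (i.e. `z = u₀·π^a·δ^b` with `u₀` a
unit), and `z` is a square in the fraction field of the henselization of the localization
of `R` at the prime `(π)`. Then `z = u·π^{2r}·δ^{2s}` with `u ∈ Rˣ` whose image in `R/(π)`
is a square; in particular the image of `u` in `R/m` is a square.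

The henselization of `R_{(π)}` is abstracted as a henselian discrete valuation ring `S`
under `R` in which `π` becomes a uniformizer and whose residue field is the fraction field
of `R/(π)` (compatibly with reduction); `FS` is its fraction field. -/
theorem stmt_11 (R : Type*) [CommRing R] [IsDomain R] [IsNoetherianRing R] [IsLocalRing R]
    (π δ : R) (hπ : Prime π) (hδ : Prime δ)
    (hm : IsLocalRing.maximalIdeal R = Ideal.span {π, δ})
    (z : R) (hz : z ≠ 0)
    (u₀ : Rˣ) (a b : ℕ) (hsupp : z = (u₀ : R) * π ^ a * δ ^ b)
    -- `S` is the henselization of the localization of `R` at `(π)`: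
    (S : Type*) [CommRing S] [IsDomain S] [IsDiscreteValuationRing S] [HenselianLocalRing S]
    [Algebra R S] (hinj : Function.Injective (algebraMap R S))
    (hunif : Irreducible (algebraMap R S π))
    [IsDomain (R ⧸ Ideal.span {π})]
    [Algebra (R ⧸ Ideal.span {π}) (IsLocalRing.ResidueField S)]
    [IsFractionRing (R ⧸ Ideal.span {π}) (IsLocalRing.ResidueField S)]
    (hcomp : ∀ x : R, IsLocalRing.residue S (algebraMap R S x)
      = algebraMap (R ⧸ Ideal.span {π}) (IsLocalRing.ResidueField S)
          (Ideal.Quotient.mk (Ideal.span {π}) x))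
    (FS : Type*) [Field FS] [Algebra S FS] [IsFractionRing S FS]
    [Algebra R FS] [IsScalarTower R S FS]
    (hsq : IsSquare (algebraMap R FS z)) :
    ∃ (u : Rˣ) (r s : ℕ),
      z = (u : R) * π ^ (2 * r) * δ ^ (2 * s) ∧
      IsSquare (Ideal.Quotient.mk (Ideal.span {π}) (u : R)) ∧
      IsSquare (IsLocalRing.residue R (u : R)) :=
  stmt_11_general R π δ hπ hδ hm z u₀ a b hsupp S hunif hcomp FS hsq
end

section
/- Let F be a field with char F ≠ 2 in which −1 is a square and such that for every finite extension ℓ/F the group ℓ×/ℓ×² has at most 2 elements. Then for every closed point γ of the projective line P¹_F with function field K = F(x), at least one of x, x+1, x(x+1) is a square in the henselization (equivalently, completion) K_γ of K at γ. -/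
/-!
Let `O` be the henselian valuation ring of `K_γ`, with residue field `ℓ`, a finite extension
of `F`, and put `a = x`. If `a ∈ O`, let `t ∈ ℓ` be its residue. If `t = 0` then `t + 1 = 1`,
and if `t = -1` then `t` is a square since `-1` is; otherwise `t, t + 1, 1` are nonzero, so
two of them lie in the same of the at most two square classes of `ℓ`. Either way one of
`t, t + 1, t(t + 1)` is a nonzero square, and since `2` is a unit Hensel's lemma lifts its
square root to `O`. If `a ∉ O`, then `a⁻¹` lies in the maximal ideal, so `1 + a⁻¹` is a square
by Hensel's lemma again, and so is `a(a + 1) = a² (1 + a⁻¹)`.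
-/

open IsLocalRing

/-- `|kˣ / kˣ²| ≤ 2`, phrased as: among any three nonzero elements, two have a square product. -/
def HasAtMostTwoSquareClasses (k : Type*) [Field k] : Prop :=
  ∀ x y z : k, x ≠ 0 → y ≠ 0 → z ≠ 0 → IsSquare (x * y) ∨ IsSquare (x * z) ∨ IsSquare (y * z)

theorem HasAtMostTwoSquareClasses.isSquare_or_isSquare_add_one_or_isSquare_mul_add_one
    {k : Type*} [Field k] (hk : HasAtMostTwoSquareClasses k) (hneg : IsSquare (-1 : k))
    (t : k) :
    (IsSquare t ∧ t ≠ 0) ∨ (IsSquare (t + 1) ∧ t + 1 ≠ 0) ∨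
      (IsSquare (t * (t + 1)) ∧ t * (t + 1) ≠ 0) := by
  by_cases ht : t = 0
  · subst ht
    simp
  by_cases ht1 : t + 1 = 0
  · rw [eq_neg_of_add_eq_zero_left ht1]
    exact Or.inl ⟨hneg, neg_ne_zero.mpr one_ne_zero⟩
  rcases hk t (t + 1) 1 ht ht1 one_ne_zero with h | h | h
  · exact Or.inr <| Or.inr ⟨h, mul_ne_zero ht ht1⟩
  · exact Or.inl ⟨by simpa using h, ht⟩
  · exact Or.inr <| Or.inl ⟨by simpa using h, ht1⟩

namespace HenselianLocalRing

variable {R : Type*} [CommRing R] [HenselianLocalRing R]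

open Polynomial in
theorem isSquare_of_isSquare_residue (h2 : (2 : ResidueField R) ≠ 0) {x : R}
    (hx : IsSquare (residue R x)) (hx0 : residue R x ≠ 0) : IsSquare x := by
  obtain ⟨s, hs⟩ := hx
  obtain ⟨r, rfl⟩ := residue_surjective s
  have hr : residue R r ≠ 0 := fun h ↦ hx0 (by rw [hs, h, mul_zero])
  have hroot : (X ^ 2 - C x).eval r ∈ maximalIdeal R := by
    rw [← residue_eq_zero_iff]
    simp only [eval_sub, eval_pow, eval_X, eval_C, map_sub, map_pow, hs]
    ring
  have hderiv : IsUnit ((X ^ 2 - C x).derivative.eval r) := by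
    have : (X ^ 2 - C x).derivative.eval r = 2 * r := by simp [one_add_one_eq_two]
    rw [← residue_ne_zero_iff_isUnit, this, map_mul, map_ofNat]
    exact mul_ne_zero h2 hr
  obtain ⟨y, hy, -⟩ := is_henselian (X ^ 2 - C x) (monic_X_pow_sub_C x two_ne_zero) r hroot hderiv
  refine ⟨y, ?_⟩
  simp only [IsRoot, eval_sub, eval_pow, eval_X, eval_C, sub_eq_zero] at hy
  rw [← hy, sq]

theorem isSquare_one_add_of_mem_maximalIdeal (h2 : (2 : ResidueField R) ≠ 0) {m : R}
    (hm : m ∈ maximalIdeal R) : IsSquare (1 + m) := by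
  have h1 : residue R (1 + m) = 1 := by
    rw [map_add, map_one, (residue_eq_zero_iff m).mpr hm, add_zero]
  exact isSquare_of_isSquare_residue h2 (h1 ▸ IsSquare.one) (h1 ▸ one_ne_zero)

theorem isSquare_or_isSquare_add_one_or_isSquare_mul_add_one
    (h2 : (2 : ResidueField R) ≠ 0) (hneg : IsSquare (-1 : ResidueField R))
    (hk : HasAtMostTwoSquareClasses (ResidueField R)) (a : R) :
    IsSquare a ∨ IsSquare (a + 1) ∨ IsSquare (a * (a + 1)) := by
  have lift := fun {x : R} (hx : IsSquare (residue R x) ∧ residue R x ≠ 0) ↦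
    isSquare_of_isSquare_residue h2 hx.1 hx.2
  rcases hk.isSquare_or_isSquare_add_one_or_isSquare_mul_add_one hneg (residue R a) with
    h | h | h
  · exact Or.inl (lift h)
  · exact Or.inr <| Or.inl <| lift (x := a + 1) (by rwa [map_add, map_one])
  · exact Or.inr <| Or.inr <| lift (x := a * (a + 1)) (by rwa [map_mul, map_add, map_one])

end HenselianLocalRing

theorem ValuationRing.isInteger_or_inv_mem_maximalIdeal {R K : Type*} [CommRing R] [IsDomain R]
    [ValuationRing R] [Field K] [Algebra R K] [IsFractionRing R K] (a : K) :
    IsLocalization.IsInteger R a ∨ ∃ m ∈ maximalIdeal R, algebraMap R K m = a⁻¹ := by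
  by_cases ha : IsLocalization.IsInteger R a
  · exact Or.inl ha
  obtain ⟨m, hm⟩ := (isInteger_or_isInteger R a).resolve_left ha
  refine Or.inr ⟨m, fun ⟨u, hu⟩ ↦ ha ⟨↑u⁻¹, ?_⟩, hm⟩
  rw [← inv_inv a, ← hm, ← hu]
  exact eq_inv_of_mul_eq_one_left (by rw [← map_mul, Units.inv_mul, map_one])

theorem ValuationRing.isSquare_or_isSquare_add_one_or_isSquare_mul_add_one
    {R K : Type*} [CommRing R] [IsDomain R] [ValuationRing R] [HenselianLocalRing R]
    [Field K] [Algebra R K] [IsFractionRing R K]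
    (h2 : (2 : ResidueField R) ≠ 0) (hneg : IsSquare (-1 : ResidueField R))
    (hk : HasAtMostTwoSquareClasses (ResidueField R)) (a : K) :
    IsSquare a ∨ IsSquare (a + 1) ∨ IsSquare (a * (a + 1)) := by
  rcases ValuationRing.isInteger_or_inv_mem_maximalIdeal (R := R) a with ⟨b, rfl⟩ | ⟨m, hm, hma⟩
  · have hsq := fun {x : R} (hx : IsSquare x) ↦ hx.map (algebraMap R K)
    rcases HenselianLocalRing.isSquare_or_isSquare_add_one_or_isSquare_mul_add_one h2 hneg hk b
      with h | h | h
    · exact Or.inl (hsq h)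
    · exact Or.inr <| Or.inl <| by simpa using hsq h
    · exact Or.inr <| Or.inr <| by simpa using hsq h
  · obtain ⟨c, hc⟩ := (HenselianLocalRing.isSquare_one_add_of_mem_maximalIdeal h2 hm).map
      (algebraMap R K)
    refine Or.inr <| Or.inr ⟨a * c, ?_⟩
    have : a * (a + 1) = a * a * (1 + a⁻¹) := by
      rcases eq_or_ne a 0 with rfl | ha
      · simp
      · field_simp
    rw [this, ← hma, ← map_one (algebraMap R K), ← map_add, hc]
    ring

theorem stmt_14_general (F : Type) [Field F] (h2 : (2 : F) ≠ 0) (hneg : IsSquare (-1 : F))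
    (hsq2 : ∀ (ℓ : Type) [Field ℓ] [Algebra F ℓ] [FiniteDimensional F ℓ],
      ∀ x y z : ℓ, x ≠ 0 → y ≠ 0 → z ≠ 0 →
        IsSquare (x * y) ∨ IsSquare (x * z) ∨ IsSquare (y * z))
    (Kγ : Type) [Field Kγ] (f : RatFunc F →+* Kγ)
    (O : Subring Kγ) [IsDomain ↥O] [IsDiscreteValuationRing ↥O] [HenselianLocalRing ↥O]
    [Algebra ↥O Kγ] [IsFractionRing ↥O Kγ]
    [Algebra F (IsLocalRing.ResidueField ↥O)]
    [FiniteDimensional F (IsLocalRing.ResidueField ↥O)] :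
    IsSquare (f RatFunc.X) ∨ IsSquare (f (RatFunc.X + 1))
      ∨ IsSquare (f (RatFunc.X * (RatFunc.X + 1))) := by
  have h2O : (2 : ResidueField O) ≠ 0 := by
    rw [← map_ofNat (algebraMap F (ResidueField O)) 2]
    exact (map_ne_zero _).mpr h2
  have hnegO : IsSquare (-1 : ResidueField O) := by
    simpa using hneg.map (algebraMap F (ResidueField O))
  simpa using ValuationRing.isSquare_or_isSquare_add_one_or_isSquare_mul_add_one
    h2O hnegO (hsq2 (ResidueField O)) (f RatFunc.X)

/-- Let `F` be a field with `char F ≠ 2` in which `−1` is a square and such that for every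
finite extension `ℓ/F` the group `ℓˣ/ℓˣ²` has at most 2 elements (expressed: among any
three nonzero elements of `ℓ`, two have a square product). Then for every closed point `γ`
of the projective line `ℙ¹_F` with function field `K = F(x)`, at least one of `x`, `x+1`,
`x(x+1)` is a square in the henselization (equivalently, completion) `K_γ` of `K` at `γ`.

The local field `K_γ` at the closed point `γ` is abstracted as a field `Kγ` equipped with
an embedding `f : F(x) → Kγ` and a henselian discrete valuation subring `O` with fraction
field `Kγ`, such that the valuation is trivial on `F` (constants are units of `O`) and the
residue field of `O` is a finite extension of `F` (this is what it means for `γ` to be a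
closed point). -/
theorem stmt_14 (F : Type) [Field F] (h2 : (2 : F) ≠ 0) (hneg : IsSquare (-1 : F))
    (hsq2 : ∀ (ℓ : Type) [Field ℓ] [Algebra F ℓ] [FiniteDimensional F ℓ],
      ∀ x y z : ℓ, x ≠ 0 → y ≠ 0 → z ≠ 0 →
        IsSquare (x * y) ∨ IsSquare (x * z) ∨ IsSquare (y * z))
    (Kγ : Type) [Field Kγ] (f : RatFunc F →+* Kγ)
    (O : Subring Kγ) [IsDomain ↥O] [IsDiscreteValuationRing ↥O] [HenselianLocalRing ↥O]
    [Algebra ↥O Kγ] [IsFractionRing ↥O Kγ]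
    (hconst : ∀ c : F, c ≠ 0 → ∃ w : (↥O)ˣ, ((w : ↥O) : Kγ) = f (RatFunc.C c))
    [Algebra F (IsLocalRing.ResidueField ↥O)]
    [FiniteDimensional F (IsLocalRing.ResidueField ↥O)]
    (hres : ∀ (c : F) (h : f (RatFunc.C c) ∈ O),
      algebraMap F (IsLocalRing.ResidueField ↥O) c
        = IsLocalRing.residue ↥O ⟨f (RatFunc.C c), h⟩) :
    IsSquare (f RatFunc.X) ∨ IsSquare (f (RatFunc.X + 1))
      ∨ IsSquare (f (RatFunc.X * (RatFunc.X + 1))) :=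
  stmt_14_general F h2 hneg hsq2 Kγ f O
end
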